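/- arXiv:1806.09843 — 3 statements merged into one kernel-verified Lean document; each statement's English description precedes it below -/
import Mathlib

section
/- For all reals β_m > 0, β_I > 0, γ_t > 0 and K_I ≥ 0, the outage probability with NLoS (Rayleigh) main link and LoS (Rician with factor K_I) interference link satisfies ∫₀^∞ (1 - exp(-γ_t·β_I·g/β_m))·f_{K_I}(g) dg = 1 - (β_m/(2·γ_t·β_I + β_m))·exp( -2·γ_t·K_I·β_I/(2·γ_t·β_I + β_m) ). -/
open MeasureTheory Real Set

/-- Modified Bessel function of the first kind, order zero:
`I₀(x) = ∑ (x²/4)ⁿ / (n!)²`. -/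
noncomputable def besselI0 (x : ℝ) : ℝ :=
  ∑' n : ℕ, (x ^ 2 / 4) ^ n / ((Nat.factorial n : ℝ)) ^ 2

/-- First-order Marcum Q-function:
`Q(a,b) = ∫_b^∞ x · exp(-(x²+a²)/2) · I₀(a·x) dx`. -/
noncomputable def marcumQ (a b : ℝ) : ℝ :=
  ∫ x in Set.Ioi b, x * Real.exp (-(x ^ 2 + a ^ 2) / 2) * besselI0 (a * x)

/-- Normalized Rician fading density with Rician factor `K`. -/
noncomputable def ricianPDF (K h : ℝ) : ℝ :=
  (1 / 2) * Real.exp (-K - h / 2) * besselI0 (Real.sqrt (2 * K * h))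

/-!
Expanding `I₀` in its power series, the Laplace transform `E[e^{-sG}]` of the Rician density
integrates term by term against the Gamma integrals `∫ hⁿ e^{-ah} dh = n!/a^{n+1}` and resums to
`e^{-2sK/(2s+1)}/(2s+1)`. The outage probability is `1 - E[e^{-sG}]` at `s = γ_t β_I / β_m`.
-/

open scoped Nat

lemma integral_pow_mul_exp_neg_mul_Ioi {a : ℝ} (ha : 0 < a) (n : ℕ) :
    ∫ h in Ioi (0 : ℝ), h ^ n * exp (-(a * h)) = n ! / a ^ (n + 1) := by
  have h := integral_rpow_mul_exp_neg_mul_Ioi (a := n + 1) (by positivity) ha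
  simp only [add_sub_cancel_right, rpow_natCast, Gamma_nat_eq_factorial] at h
  rw [h, ← Nat.cast_succ, rpow_natCast, one_div, inv_pow, inv_mul_eq_div]

lemma integrableOn_pow_mul_exp_neg_mul_Ioi {a : ℝ} (ha : 0 < a) (n : ℕ) :
    IntegrableOn (fun h : ℝ => h ^ n * exp (-(a * h))) (Ioi 0) :=
  Integrable.of_integral_ne_zero <| by
    rw [integral_pow_mul_exp_neg_mul_Ioi ha]; positivity

lemma exp_neg_mul_mul_ricianPDF_eq_tsum {K : ℝ} (hK : 0 ≤ K) (s : ℝ) {h : ℝ} (hh : 0 ≤ h) :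
    exp (-(s * h)) * ricianPDF K h =
      exp (-K) / 2 *
        ∑' n : ℕ, (K / 2) ^ n / (n ! : ℝ) ^ 2 * (h ^ n * exp (-((s + 1 / 2) * h))) := by
  have hsq : √(2 * K * h) ^ 2 = 2 * K * h := sq_sqrt (by positivity)
  have hexp : exp (-(s * h)) * exp (-K - h / 2) = exp (-K) * exp (-((s + 1 / 2) * h)) := by
    rw [← exp_add, ← exp_add]; ring_nf
  simp only [ricianPDF, besselI0, hsq, ← tsum_mul_left]
  refine tsum_congr fun n => ?_
  rw [show 2 * K * h / 4 = K / 2 * h by ring, mul_pow]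
  linear_combination (1 / 2 * ((K / 2) ^ n * h ^ n / (n ! : ℝ) ^ 2)) * hexp

theorem integral_exp_neg_mul_mul_ricianPDF {K s : ℝ} (hK : 0 ≤ K) (hs : -1 / 2 < s) :
    ∫ h in Ioi (0 : ℝ), exp (-(s * h)) * ricianPDF K h =
      exp (-(2 * s * K) / (2 * s + 1)) / (2 * s + 1) := by
  rw [setIntegral_congr_fun measurableSet_Ioi fun h (hh : 0 < h) =>
    exp_neg_mul_mul_ricianPDF_eq_tsum hK s hh.le, integral_const_mul]
  obtain ⟨a, hs_add⟩ : ∃ a, s + 1 / 2 = a := ⟨_, rfl⟩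
  have ha : 0 < a := by linarith
  let term (n : ℕ) (h : ℝ) : ℝ := (K / 2) ^ n / (n ! : ℝ) ^ 2 * (h ^ n * exp (-(a * h)))
  have hterm (n : ℕ) : ∫ h in Ioi (0 : ℝ), term n h = (K / (2 * a)) ^ n / n ! / a := by
    rw [integral_const_mul, integral_pow_mul_exp_neg_mul_Ioi ha, div_pow, div_pow, mul_pow]
    field_simp
    ring
  have hnorm (n : ℕ) : ∫ h in Ioi (0 : ℝ), ‖term n h‖ = ∫ h in Ioi (0 : ℝ), term n h :=
    setIntegral_congr_fun measurableSet_Ioi fun h (hh : 0 < h) => norm_of_nonneg (by positivity)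
  have hsum := hasSum_integral_of_summable_integral_norm (F := term)
    (fun n => (integrableOn_pow_mul_exp_neg_mul_Ioi ha n).const_mul _)
    (((summable_pow_div_factorial _).div_const a).congr fun n => ((hnorm n).trans (hterm n)).symm)
  rw [funext hterm] at hsum
  have hexp : HasSum (fun n => (K / (2 * a)) ^ n / n ! / a) (exp (K / (2 * a)) / a) := by
    rw [exp_eq_exp_ℝ]; exact (NormedSpace.expSeries_div_hasSum_exp _).div_const a
  rw [hs_add, hsum.unique hexp, div_mul_div_comm, ← exp_add]
  have h2a : 2 * s + 1 = 2 * a := by rw [← hs_add]; ring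
  rw [h2a]
  congr 2
  field_simp
  rw [← hs_add]
  ring

lemma integrableOn_exp_neg_mul_mul_ricianPDF {K s : ℝ} (hK : 0 ≤ K) (hs : -1 / 2 < s) :
    IntegrableOn (fun h => exp (-(s * h)) * ricianPDF K h) (Ioi 0) :=
  Integrable.of_integral_ne_zero <| by
    rw [integral_exp_neg_mul_mul_ricianPDF hK hs]
    exact (div_pos (exp_pos _) (by linarith)).ne'

lemma integral_ricianPDF {K : ℝ} (hK : 0 ≤ K) : ∫ h in Ioi (0 : ℝ), ricianPDF K h = 1 := by
  simpa using integral_exp_neg_mul_mul_ricianPDF hK (s := 0) (by norm_num)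

lemma integrableOn_ricianPDF {K : ℝ} (hK : 0 ≤ K) : IntegrableOn (ricianPDF K) (Ioi 0) := by
  simpa using integrableOn_exp_neg_mul_mul_ricianPDF hK (s := 0) (by norm_num)

theorem stmt_6 (βm βI γt KI : ℝ) (hβm : 0 < βm) (hβI : 0 < βI) (hγt : 0 < γt)
    (hKI : 0 ≤ KI) :
    ∫ g in Set.Ioi (0 : ℝ),
        (1 - Real.exp (-(γt * βI * g) / βm)) * ricianPDF KI g =
      1 - (βm / (2 * γt * βI + βm)) *
        Real.exp (-(2 * γt * KI * βI) / (2 * γt * βI + βm)) := by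
  have hc : -1 / 2 < γt * βI / βm := by linarith [show 0 < γt * βI / βm by positivity]
  have hexponent (g : ℝ) : -(γt * βI * g) / βm = -(γt * βI / βm * g) := by ring
  simp only [hexponent, sub_mul, one_mul]
  rw [integral_sub (integrableOn_ricianPDF hKI) (integrableOn_exp_neg_mul_mul_ricianPDF hKI hc),
    integral_ricianPDF hKI, integral_exp_neg_mul_mul_ricianPDF hKI hc]
  have hden : 2 * (γt * βI / βm) + 1 = (2 * γt * βI + βm) / βm := by field_simp
  rw [hden]
  field_simp
end

section
/- For all reals β_m > 0, β_I > 0, γ_t > 0 and K_m ≥ 0, the outage probability with LoS (Rician with factor K_m) main link and NLoS (Rayleigh) interference link satisfies ∫₀^∞ (1 - Q(√(2·K_m), √(γ_t·β_I·g/β_m)))·exp(-g) dg = (γ_t·β_I/(2·β_m + γ_t·β_I))·exp( -2·K_m·β_m/(2·β_m + γ_t·β_I) ). -/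
open MeasureTheory Real Set

/-!
`1 - Q(a, b)` is the mass on `(0, b]` of the Rice density `f(x) = x e^{-(x² + a²)/2} I₀(a x)`.
Averaging it against `e^{-g}` with `b = √(c g)`, `c = γt βI / βm`, and exchanging the integrals
over the region `x² ≤ c g` leaves `∫ f(x) e^{-x²/c} dx`. Expanding `I₀` in its power series and
integrating term by term with the Gaussian moments `∫ x^{2n+1} e^{-p x²} dx = n! / (2 p^{n+1})`
gives `∫ x e^{-p x²} I₀(a x) dx = e^{a²/(4p)} / (2p)`; at `p = 1/2` this shows that `f` has mass
one, and at `p = 1/2 + 1/c` it is the closed form.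
-/

open scoped Nat

section NonnegSeries

variable {α : Type*} [MeasurableSpace α] {μ : Measure α} {F : ℕ → α → ℝ} {f : α → ℝ}

theorem integrable_of_hasSum_of_nonneg (hF_int : ∀ n, Integrable (F n) μ)
    (hF_nonneg : ∀ n, 0 ≤ᵐ[μ] F n) (hf : ∀ᵐ a ∂μ, HasSum (F · a) (f a))
    (hF_sum : Summable fun n => ∫ a, F n a ∂μ) : Integrable f μ := by
  have hF_nonneg' : ∀ᵐ a ∂μ, ∀ n, 0 ≤ F n a := ae_all_iff.2 hF_nonneg
  have hf_nonneg : 0 ≤ᵐ[μ] f := by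
    filter_upwards [hF_nonneg', hf] with a ha hfa using hfa.nonneg ha
  refine ⟨aestronglyMeasurable_of_tendsto_ae Filter.atTop
    (fun N => Finset.aestronglyMeasurable_fun_sum _ fun n _ => (hF_int n).1)
    (hf.mono fun a ha => ha.tendsto_sum_nat), (hasFiniteIntegral_iff_ofReal hf_nonneg).2 ?_⟩
  calc ∫⁻ a, ENNReal.ofReal (f a) ∂μ
      = ∫⁻ a, ∑' n, ENNReal.ofReal (F n a) ∂μ := by
        refine lintegral_congr_ae ?_
        filter_upwards [hF_nonneg', hf] with a ha hfa
        rw [← hfa.tsum_eq, ENNReal.ofReal_tsum_of_nonneg ha hfa.summable]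
    _ = ∑' n, ENNReal.ofReal (∫ a, F n a ∂μ) := by
        rw [lintegral_tsum fun n => (hF_int n).aemeasurable.ennreal_ofReal]
        congr 1 with n
        rw [ofReal_integral_eq_lintegral_ofReal (hF_int n) (hF_nonneg n)]
    _ = ENNReal.ofReal (∑' n, ∫ a, F n a ∂μ) :=
        (ENNReal.ofReal_tsum_of_nonneg (fun n => integral_nonneg_of_ae (hF_nonneg n)) hF_sum).symm
    _ < ⊤ := ENNReal.ofReal_lt_top

theorem hasSum_integral_of_hasSum_of_nonneg (hF_int : ∀ n, Integrable (F n) μ)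
    (hF_nonneg : ∀ n, 0 ≤ᵐ[μ] F n) (hf : ∀ᵐ a ∂μ, HasSum (F · a) (f a))
    (hF_sum : Summable fun n => ∫ a, F n a ∂μ) :
    HasSum (fun n => ∫ a, F n a ∂μ) (∫ a, f a ∂μ) := by
  have hF_norm (n : ℕ) : ∫ a, ‖F n a‖ ∂μ = ∫ a, F n a ∂μ :=
    integral_congr_ae <| (hF_nonneg n).mono fun a ha => Real.norm_of_nonneg ha
  rw [← integral_congr_ae (hf.mono fun a ha => ha.tsum_eq)]
  exact hasSum_integral_of_summable_integral_norm hF_int (by simpa only [hF_norm] using hF_sum)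

end NonnegSeries

theorem summable_besselI0_series (x : ℝ) :
    Summable fun n : ℕ => (x ^ 2 / 4) ^ n / (n ! : ℝ) ^ 2 := by
  refine (Real.summable_pow_div_factorial (x ^ 2 / 4)).of_nonneg_of_le (fun n => by positivity)
    fun n => div_le_div_of_nonneg_left (by positivity) (by positivity) ?_
  have : (1 : ℝ) ≤ n ! := by exact_mod_cast n.factorial_pos
  nlinarith

theorem hasSum_mul_besselI0 (a x : ℝ) :
    HasSum (fun n : ℕ => (a ^ 2 / 4) ^ n / (n ! : ℝ) ^ 2 * x ^ (2 * n + 1))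
      (x * besselI0 (a * x)) := by
  have h := (summable_besselI0_series (a * x)).hasSum.mul_left x
  rwa [show (fun n : ℕ => x * (((a * x) ^ 2 / 4) ^ n / (n ! : ℝ) ^ 2)) =
    fun n => (a ^ 2 / 4) ^ n / (n ! : ℝ) ^ 2 * x ^ (2 * n + 1) from funext fun n => by ring] at h

theorem integral_pow_mul_exp_neg_mul_sq {p : ℝ} (hp : 0 < p) (n : ℕ) :
    ∫ x in Ioi (0 : ℝ), x ^ (2 * n + 1) * exp (-(p * x ^ 2)) = n ! / (2 * p ^ (n + 1)) := by
  have h := integral_rpow_mul_exp_neg_mul_rpow two_pos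
    (neg_one_lt_zero.trans_le (by positivity) : (-1 : ℝ) < 2 * n + 1) hp
  rw [show -(2 * (n : ℝ) + 1 + 1) / 2 = -((n + 1 : ℕ) : ℝ) by push_cast; ring, rpow_neg hp.le,
    rpow_natCast, show (2 * (n : ℝ) + 1 + 1) / 2 = n + 1 by ring, Gamma_nat_eq_factorial] at h
  rw [show (n ! : ℝ) / (2 * p ^ (n + 1)) = (p ^ (n + 1))⁻¹ * (1 / 2) * (n ! : ℝ) by
    field_simp, ← h]
  refine setIntegral_congr_fun measurableSet_Ioi fun x _ => ?_
  rw [show (2 * (n : ℝ) + 1) = ((2 * n + 1 : ℕ) : ℝ) by push_cast; ring, rpow_natCast, rpow_two,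
    neg_mul]

theorem integrableOn_pow_mul_exp_neg_mul_sq {p : ℝ} (hp : 0 < p) (n : ℕ) :
    IntegrableOn (fun x : ℝ => x ^ n * exp (-(p * x ^ 2))) (Ioi 0) := by
  refine (integrableOn_rpow_mul_exp_neg_mul_sq hp
    (neg_one_lt_zero.trans_le n.cast_nonneg)).congr_fun (fun x _ => ?_) measurableSet_Ioi
  simp only [rpow_natCast, neg_mul]

theorem integrableOn_and_integral_mul_exp_neg_mul_sq_mul_besselI0 (a : ℝ) {p : ℝ} (hp : 0 < p) :
    IntegrableOn (fun x => x * exp (-(p * x ^ 2)) * besselI0 (a * x)) (Ioi 0) ∧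
      ∫ x in Ioi (0 : ℝ), x * exp (-(p * x ^ 2)) * besselI0 (a * x) =
        exp (a ^ 2 / (4 * p)) / (2 * p) := by
  set F : ℕ → ℝ → ℝ := fun n x =>
    (a ^ 2 / 4) ^ n / (n ! : ℝ) ^ 2 * (x ^ (2 * n + 1) * exp (-(p * x ^ 2)))
  have hF_int (n : ℕ) : IntegrableOn (F n) (Ioi 0) :=
    (integrableOn_pow_mul_exp_neg_mul_sq hp _).const_mul _
  have hF_nonneg (n : ℕ) : 0 ≤ᵐ[volume.restrict (Ioi 0)] F n := by
    filter_upwards [self_mem_ae_restrict measurableSet_Ioi] with x (hx : 0 < x)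
    positivity
  have hF (x : ℝ) : HasSum (F · x) (x * exp (-(p * x ^ 2)) * besselI0 (a * x)) := by
    have h := (hasSum_mul_besselI0 a x).mul_right (exp (-(p * x ^ 2)))
    rwa [mul_right_comm, show (fun n : ℕ => (a ^ 2 / 4) ^ n / (n ! : ℝ) ^ 2 * x ^ (2 * n + 1) *
      exp (-(p * x ^ 2))) = (F · x) from funext fun n => by simp only [F]; ring] at h
  have hF_integral :
      HasSum (fun n => ∫ x in Ioi 0, F n x) (exp (a ^ 2 / (4 * p)) / (2 * p)) := by
    have h := (NormedSpace.expSeries_div_hasSum_exp (a ^ 2 / (4 * p))).div_const (2 * p)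
    rw [← Real.exp_eq_exp_ℝ] at h
    have h_term (n : ℕ) :
        ∫ x in Ioi 0, F n x = (a ^ 2 / (4 * p)) ^ n / (n ! : ℝ) / (2 * p) := by
      rw [integral_const_mul, integral_pow_mul_exp_neg_mul_sq hp, div_pow, div_pow, mul_pow]
      field_simp
      ring
    simpa only [h_term] using h
  exact ⟨integrable_of_hasSum_of_nonneg hF_int hF_nonneg (ae_of_all _ hF) hF_integral.summable,
    (hasSum_integral_of_hasSum_of_nonneg hF_int hF_nonneg (ae_of_all _ hF)
      hF_integral.summable).unique hF_integral⟩

noncomputable def riceDensity (a x : ℝ) : ℝ :=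
  x * exp (-(x ^ 2 + a ^ 2) / 2) * besselI0 (a * x)

theorem integrableOn_and_integral_riceDensity_mul_exp_neg_mul_sq (a : ℝ) {q : ℝ} (hq : 0 ≤ q) :
    IntegrableOn (fun x => riceDensity a x * exp (-(q * x ^ 2))) (Ioi 0) ∧
      ∫ x in Ioi (0 : ℝ), riceDensity a x * exp (-(q * x ^ 2)) =
        exp (-(a ^ 2 * q / (1 + 2 * q))) / (1 + 2 * q) := by
  have h_eq : (fun x => riceDensity a x * exp (-(q * x ^ 2))) =
      fun x => exp (-(a ^ 2 / 2)) * (x * exp (-((1 / 2 + q) * x ^ 2)) * besselI0 (a * x)) := by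
    funext x
    have h_exp : exp (-(x ^ 2 + a ^ 2) / 2) * exp (-(q * x ^ 2)) =
        exp (-(a ^ 2 / 2)) * exp (-((1 / 2 + q) * x ^ 2)) := by
      rw [← exp_add, ← exp_add]
      ring_nf
    simp only [riceDensity]
    linear_combination x * besselI0 (a * x) * h_exp
  obtain ⟨h_int, h_integral⟩ :=
    integrableOn_and_integral_mul_exp_neg_mul_sq_mul_besselI0 a (by positivity : 0 < 1 / 2 + q)
  refine ⟨h_eq ▸ h_int.const_mul _, ?_⟩
  rw [h_eq, integral_const_mul, h_integral, show 2 * (1 / 2 + q) = 1 + 2 * q by ring,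
    mul_div_assoc', ← exp_add]
  congr 2
  field_simp
  ring

theorem integrableOn_riceDensity (a : ℝ) : IntegrableOn (riceDensity a) (Ioi 0) := by
  simpa using (integrableOn_and_integral_riceDensity_mul_exp_neg_mul_sq a le_rfl).1

theorem integral_riceDensity (a : ℝ) : ∫ x in Ioi (0 : ℝ), riceDensity a x = 1 := by
  simpa using (integrableOn_and_integral_riceDensity_mul_exp_neg_mul_sq a le_rfl).2

theorem one_sub_marcumQ (a : ℝ) {b : ℝ} (hb : 0 ≤ b) :
    1 - marcumQ a b = ∫ x in Ioc 0 b, riceDensity a x := by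
  have h := setIntegral_union (Ioc_disjoint_Ioi le_rfl) measurableSet_Ioi
    ((integrableOn_riceDensity a).mono_set Ioc_subset_Ioi_self)
    ((integrableOn_riceDensity a).mono_set (Ioi_subset_Ioi hb))
  rw [Ioc_union_Ioi_eq_Ioi hb, integral_riceDensity] at h
  rw [h, marcumQ]
  simp only [riceDensity, add_sub_cancel_right]

theorem integral_setIntegral_Ioc_sqrt_mul_exp_neg {f : ℝ → ℝ} (hf : IntegrableOn f (Ioi 0))
    {c : ℝ} (hc : 0 < c) :
    ∫ g in Ioi (0 : ℝ), (∫ x in Ioc 0 √(c * g), f x) * exp (-g) =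
      ∫ x in Ioi (0 : ℝ), f x * exp (-(c⁻¹ * x ^ 2)) := by
  set μ := volume.restrict (Ioi (0 : ℝ))
  -- both iterated integrals are the integral of `e^{-g} f(x)` over the region `x² ≤ c g`
  set H : ℝ → ℝ → ℝ := fun g x => {z : ℝ × ℝ | z.2 ^ 2 ≤ c * z.1}.indicator
    (fun z => exp (-z.1) * f z.2) (g, x)
  have hH : Integrable (Function.uncurry H) (μ.prod μ) :=
    ((integrableOn_exp_neg_Ioi 0).mul_prod hf).indicator
      (measurableSet_le (by fun_prop) (by fun_prop))
  have h_inner_x (g : ℝ) : ∫ x, H g x ∂μ = (∫ x in Ioc 0 √(c * g), f x) * exp (-g) := by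
    have h_set : {x : ℝ | x ^ 2 ≤ c * g} ∩ Ioi 0 = Ioc 0 √(c * g) := by
      ext x
      simp only [mem_inter_iff, mem_ofPred_eq, mem_Ioi, mem_Ioc]
      exact ⟨fun ⟨h, hx⟩ => ⟨hx, (le_sqrt' hx).2 h⟩, fun ⟨hx, h⟩ => ⟨(le_sqrt' hx).1 h, hx⟩⟩
    change ∫ x, {x : ℝ | x ^ 2 ≤ c * g}.indicator (fun x => exp (-g) * f x) x ∂μ = _
    rw [integral_indicator (measurableSet_le (by fun_prop) (by fun_prop)),
      Measure.restrict_restrict (measurableSet_le (by fun_prop) (by fun_prop)), h_set,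
      integral_const_mul, mul_comm]
  have h_inner_g (x : ℝ) (hx : 0 < x) : ∫ g, H g x ∂μ = f x * exp (-(c⁻¹ * x ^ 2)) := by
    have h_set : {g : ℝ | x ^ 2 ≤ c * g} ∩ Ioi 0 = Ici (c⁻¹ * x ^ 2) := by
      ext g
      simp only [mem_inter_iff, mem_ofPred_eq, mem_Ioi, mem_Ici, ← div_le_iff₀' hc,
        div_eq_inv_mul]
      exact ⟨And.left, fun h => ⟨h, (by positivity : 0 < c⁻¹ * x ^ 2).trans_le h⟩⟩
    change ∫ g, {g : ℝ | x ^ 2 ≤ c * g}.indicator (fun g => exp (-g) * f x) g ∂μ = _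
    rw [integral_indicator (measurableSet_le (by fun_prop) (by fun_prop)),
      Measure.restrict_restrict (measurableSet_le (by fun_prop) (by fun_prop)), h_set,
      integral_mul_const, integral_Ici_eq_integral_Ioi, integral_exp_neg_Ioi, mul_comm]
  calc ∫ g in Ioi (0 : ℝ), (∫ x in Ioc 0 √(c * g), f x) * exp (-g)
      = ∫ g, ∫ x, H g x ∂μ ∂μ := by simp only [h_inner_x]; rfl
    _ = ∫ x, ∫ g, H g x ∂μ ∂μ := integral_integral_swap hH
    _ = ∫ x in Ioi (0 : ℝ), f x * exp (-(c⁻¹ * x ^ 2)) :=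
        setIntegral_congr_fun measurableSet_Ioi h_inner_g

theorem stmt_7 (βm βI γt Km : ℝ) (hβm : 0 < βm) (hβI : 0 < βI) (hγt : 0 < γt)
    (hKm : 0 ≤ Km) :
    ∫ g in Set.Ioi (0 : ℝ),
        (1 - marcumQ (Real.sqrt (2 * Km)) (Real.sqrt (γt * βI * g / βm))) * Real.exp (-g) =
      (γt * βI / (2 * βm + γt * βI)) *
        Real.exp (-(2 * Km * βm) / (2 * βm + γt * βI)) := by
  set a := √(2 * Km)
  have hc : 0 < γt * βI / βm := by positivity
  calc ∫ g in Ioi (0 : ℝ), (1 - marcumQ a √(γt * βI * g / βm)) * exp (-g)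
      = ∫ g in Ioi (0 : ℝ),
          (∫ x in Ioc 0 √(γt * βI / βm * g), riceDensity a x) * exp (-g) := by
        refine setIntegral_congr_fun measurableSet_Ioi fun g _ => ?_
        rw [one_sub_marcumQ a (sqrt_nonneg _), mul_div_right_comm]
    _ = ∫ x in Ioi (0 : ℝ), riceDensity a x * exp (-((γt * βI / βm)⁻¹ * x ^ 2)) :=
        integral_setIntegral_Ioc_sqrt_mul_exp_neg (integrableOn_riceDensity a) hc
    _ = exp (-(a ^ 2 * (γt * βI / βm)⁻¹ / (1 + 2 * (γt * βI / βm)⁻¹))) /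
          (1 + 2 * (γt * βI / βm)⁻¹) :=
        (integrableOn_and_integral_riceDensity_mul_exp_neg_mul_sq a (by positivity)).2
    _ = _ := by
        rw [sq_sqrt (by positivity)]
        field_simp
        ring_nf
end

section
/- Fix reals γ_t > 0, K_m ≥ 0 and K_I ≥ 0, and define A(v) = √(2·K_m·v/(v + γ_t)), B(v) = √(2·γ_t·K_I/(v + γ_t)), and p_LL(v) = 1 - Q(A(v), B(v)) + (γ_t/(v + γ_t))·exp(-(A(v)² + B(v)²)/2)·I₀(A(v)·B(v)) for v ≥ 0. Then p_LL(0) = 1 and p_LL(v) tends to 0 as v → ∞. -/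
/-!
At `v = 0` the first argument `A` vanishes, and `Q(0, b) = exp (-b² / 2)` cancels the last term.
For the limit: expanding `I₀` and integrating term by term against the Gaussian moments
`∫₀^∞ x^(2n+1) e^(-x²/2) dx = 2ⁿ n!` shows that the Rice density `x e^(-(x²+a²)/2) I₀(a x)`
has total mass `1`, so `1 - Q(a, b) = ∫₀^b … ≤ b²/2 · I₀(a b)`. As `A ≤ √(2 K_m)`,
`B ≤ √(2 K_I)` and `B² = 2 γ_t K_I / (v + γ_t)`, this gives
`0 ≤ p_LL(v) ≤ γ_t (K_I + 1) / (v + γ_t) · I₀(√(2 K_m) √(2 K_I))`.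
-/

open MeasureTheory Real Set

/-- `A(v) = √(2·K_m·v/(v + γ_t))`. -/
noncomputable def Afun (Km γt v : ℝ) : ℝ := Real.sqrt (2 * Km * v / (v + γt))

/-- `B(v) = √(2·γ_t·K_I/(v + γ_t))`. -/
noncomputable def Bfun (KI γt v : ℝ) : ℝ := Real.sqrt (2 * γt * KI / (v + γt))

/-- Outage probability when both links are LoS, as a function of `v = β_m/β_I`. -/
noncomputable def pLL (γt Km KI v : ℝ) : ℝ :=
  1 - marcumQ (Afun Km γt v) (Bfun KI γt v) +
    (γt / (v + γt)) * Real.exp (-((Afun Km γt v) ^ 2 + (Bfun KI γt v) ^ 2) / 2) *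
      besselI0 (Afun Km γt v * Bfun KI γt v)

/-- Outage probability when both links are NLoS, as a function of `v = β_m/β_I`. -/
noncomputable def pNN (γt v : ℝ) : ℝ := γt / (v + γt)

open Filter

theorem besselI0_summable (x : ℝ) :
    Summable fun n : ℕ => (x ^ 2 / 4) ^ n / (n.factorial : ℝ) ^ 2 := by
  refine (Real.summable_pow_div_factorial (x ^ 2 / 4)).of_nonneg_of_le (fun n => by positivity)
    fun n => div_le_div_of_nonneg_left (by positivity) (by positivity) ?_
  have h : (1 : ℝ) ≤ n.factorial := mod_cast n.factorial_pos
  nlinarith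

theorem besselI0_nonneg (x : ℝ) : 0 ≤ besselI0 x :=
  tsum_nonneg fun n => by positivity

theorem besselI0_zero : besselI0 0 = 1 := by
  rw [besselI0, tsum_eq_single 0 fun n hn => by simp [zero_pow hn]]
  simp

theorem besselI0_le_of_sq_le {x y : ℝ} (h : x ^ 2 ≤ y ^ 2) : besselI0 x ≤ besselI0 y :=
  (besselI0_summable x).tsum_le_tsum (fun n => by gcongr) (besselI0_summable y)

theorem integrableOn_pow_mul_exp_neg_sq_div_two (k : ℕ) :
    IntegrableOn (fun x : ℝ => x ^ k * exp (-x ^ 2 / 2)) (Ioi 0) := by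
  have h := integrableOn_rpow_mul_exp_neg_mul_sq (b := 1 / 2) (by norm_num)
    (s := k) (by linarith [k.cast_nonneg (α := ℝ)])
  refine h.congr_fun (fun x _ => ?_) measurableSet_Ioi
  simp only [rpow_natCast]
  ring_nf

theorem integral_pow_mul_exp_neg_sq_div_two (n : ℕ) :
    ∫ x in Ioi (0 : ℝ), x ^ (2 * n + 1) * exp (-x ^ 2 / 2) = 2 ^ n * n.factorial := by
  have h := integral_rpow_mul_exp_neg_mul_rpow (p := 2) (q := (2 * n + 1 : ℕ)) (b := 1 / 2)
    (by norm_num) (by linarith [(2 * n + 1 : ℕ).cast_nonneg (α := ℝ)]) (by norm_num)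
  have hq : ((2 * n + 1 : ℕ) + 1 : ℝ) / 2 = n + 1 := by push_cast; ring
  rw [hq, neg_div, hq, Gamma_nat_eq_factorial, rpow_neg (by norm_num), ← Nat.cast_succ,
    rpow_natCast] at h
  rw [← setIntegral_congr_fun measurableSet_Ioi fun x _ => ?_, h]
  · rw [Nat.succ_eq_add_one, one_div, inv_pow, inv_inv, pow_succ]
    ring
  · simp only [rpow_natCast, rpow_two]
    ring_nf

theorem hasSum_pow_div_factorial (x : ℝ) :
    HasSum (fun n : ℕ => x ^ n / n.factorial) (exp x) := by
  rw [exp_eq_exp_ℝ]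
  exact NormedSpace.expSeries_div_hasSum_exp x

theorem marcumQ_zero_right (a : ℝ) : marcumQ a 0 = 1 := by
  set c : ℕ → ℝ := fun n => exp (-(a ^ 2 / 2)) * ((a ^ 2 / 4) ^ n / (n.factorial : ℝ) ^ 2)
  set F : ℕ → ℝ → ℝ := fun n x => c n * (x ^ (2 * n + 1) * exp (-x ^ 2 / 2))
  have hF_int (n : ℕ) : IntegrableOn (F n) (Ioi 0) :=
    (integrableOn_pow_mul_exp_neg_sq_div_two _).const_mul (c n)
  have hF_integral (n : ℕ) :
      ∫ x in Ioi 0, F n x = exp (-(a ^ 2 / 2)) * ((a ^ 2 / 2) ^ n / n.factorial) := by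
    have h4 : (4 : ℝ) ^ n = 2 ^ n * 2 ^ n := by rw [← mul_pow]; norm_num
    simp only [F, c, integral_const_mul, integral_pow_mul_exp_neg_sq_div_two, div_pow, h4]
    field_simp
  have hF_norm (n : ℕ) : ∫ x in Ioi 0, ‖F n x‖ = ∫ x in Ioi 0, F n x :=
    setIntegral_congr_fun measurableSet_Ioi fun x (hx : 0 < x) => norm_of_nonneg (by positivity)
  have hsum := hasSum_integral_of_summable_integral_norm hF_int
    (by simpa only [hF_norm, hF_integral] using (hasSum_pow_div_factorial _).summable.mul_left _)
  have hexpand (x : ℝ) : x * exp (-(x ^ 2 + a ^ 2) / 2) * besselI0 (a * x) = ∑' n, F n x := by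
    rw [besselI0, ← tsum_mul_left]
    congr 1 with n
    rw [show -(x ^ 2 + a ^ 2) / 2 = -(a ^ 2 / 2) + -x ^ 2 / 2 by ring, exp_add]
    ring
  simp only [hF_integral] at hsum
  rw [marcumQ]
  simp only [hexpand]
  refine hsum.unique ?_
  have h := (hasSum_pow_div_factorial (a ^ 2 / 2)).mul_left (exp (-(a ^ 2 / 2)))
  rwa [← exp_add, neg_add_cancel, exp_zero] at h

theorem marcumQ_zero_left (b : ℝ) : marcumQ 0 b = exp (-b ^ 2 / 2) := by
  have hderiv (x : ℝ) : HasDerivAt (fun x => -exp (-x ^ 2 / 2)) (x * exp (-x ^ 2 / 2)) x := by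
    refine (((hasDerivAt_pow 2 x).neg.div_const 2).exp.neg).congr_deriv ?_
    simp only [Pi.neg_apply, Nat.cast_ofNat]
    ring
  have hlim : Tendsto (fun x : ℝ => -exp (-x ^ 2 / 2)) atTop (nhds 0) := by
    simpa [Function.comp_def] using (tendsto_exp_atBot.comp <| (tendsto_neg_atTop_atBot.comp
      (tendsto_pow_atTop two_ne_zero)).atBot_div_const two_pos).neg
  have hint : IntegrableOn (fun x : ℝ => x * exp (-x ^ 2 / 2)) (Ioi b) := by
    simpa [neg_div, div_eq_inv_mul] using
      (integrable_mul_exp_neg_mul_sq (b := 1 / 2) (by norm_num)).integrableOn (s := Ioi b)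
  simp only [marcumQ, besselI0_zero, zero_mul, mul_one, zero_pow two_ne_zero, add_zero]
  rw [integral_Ioi_of_hasDerivAt_of_tendsto' (fun x _ => hderiv x) hint hlim]
  ring

theorem integrableOn_marcumQ_integrand (a : ℝ) :
    IntegrableOn (fun x => x * exp (-(x ^ 2 + a ^ 2) / 2) * besselI0 (a * x)) (Ioi 0) :=
  -- a non-integrable function has Bochner integral `0`
  Integrable.of_integral_ne_zero <| by
    rw [← marcumQ, marcumQ_zero_right]
    exact one_ne_zero

theorem one_sub_marcumQ_eq_integral (a : ℝ) {b : ℝ} (hb : 0 ≤ b) :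
    1 - marcumQ a b = ∫ x in Ioc 0 b, x * exp (-(x ^ 2 + a ^ 2) / 2) * besselI0 (a * x) := by
  have hint := integrableOn_marcumQ_integrand a
  rw [← marcumQ_zero_right a, marcumQ, marcumQ, ← Ioc_union_Ioi_eq_Ioi hb,
    setIntegral_union (Ioc_disjoint_Ioi le_rfl) measurableSet_Ioi
      (hint.mono_set Ioc_subset_Ioi_self) (hint.mono_set (Ioi_subset_Ioi hb)),
    add_sub_cancel_right]

theorem one_sub_marcumQ_nonneg (a : ℝ) {b : ℝ} (hb : 0 ≤ b) : 0 ≤ 1 - marcumQ a b := by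
  rw [one_sub_marcumQ_eq_integral a hb]
  refine setIntegral_nonneg measurableSet_Ioc fun x hx => ?_
  have := besselI0_nonneg (a * x)
  have := hx.1.le
  positivity

theorem one_sub_marcumQ_le (a : ℝ) {b : ℝ} (hb : 0 ≤ b) :
    1 - marcumQ a b ≤ b ^ 2 / 2 * besselI0 (a * b) := by
  have hle : ∀ x ∈ Ioc 0 b,
      x * exp (-(x ^ 2 + a ^ 2) / 2) * besselI0 (a * x) ≤ x * besselI0 (a * b) := by
    rintro x ⟨hx, hxb⟩
    have hexp : exp (-(x ^ 2 + a ^ 2) / 2) ≤ 1 := exp_le_one_iff.mpr (by nlinarith)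
    have hbessel : besselI0 (a * x) ≤ besselI0 (a * b) :=
      besselI0_le_of_sq_le (by rw [mul_pow, mul_pow]; gcongr)
    calc x * exp (-(x ^ 2 + a ^ 2) / 2) * besselI0 (a * x) ≤ x * 1 * besselI0 (a * b) := by
          gcongr; exact besselI0_nonneg _
      _ = x * besselI0 (a * b) := by rw [mul_one]
  calc 1 - marcumQ a b ≤ ∫ x in Ioc 0 b, x * besselI0 (a * b) := by
        rw [one_sub_marcumQ_eq_integral a hb]
        exact setIntegral_mono_on ((integrableOn_marcumQ_integrand a).mono_set Ioc_subset_Ioi_self)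
          (continuous_id.mul continuous_const).integrableOn_Ioc measurableSet_Ioc hle
    _ = b ^ 2 / 2 * besselI0 (a * b) := by
        rw [← intervalIntegral.integral_of_le hb, intervalIntegral.integral_mul_const, integral_id]
        ring

section OutageProbability

variable {γt Km KI v : ℝ}

theorem Afun_le (hγt : 0 < γt) (hKm : 0 ≤ Km) (hv : 0 ≤ v) : Afun Km γt v ≤ √(2 * Km) := by
  refine sqrt_le_sqrt ?_
  rw [div_le_iff₀ (by positivity)]
  nlinarith

theorem Bfun_sq (hγt : 0 < γt) (hKI : 0 ≤ KI) (hv : 0 ≤ v) :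
    Bfun KI γt v ^ 2 = 2 * γt * KI / (v + γt) :=
  sq_sqrt (by positivity)

theorem Bfun_le (hγt : 0 < γt) (hKI : 0 ≤ KI) (hv : 0 ≤ v) : Bfun KI γt v ≤ √(2 * KI) := by
  refine sqrt_le_sqrt ?_
  rw [div_le_iff₀ (by positivity)]
  nlinarith

theorem pLL_zero (hγt : γt ≠ 0) : pLL γt Km KI 0 = 1 := by
  simp [pLL, Afun, marcumQ_zero_left, besselI0_zero, hγt]

theorem pLL_nonneg (hγt : 0 < γt) (hv : 0 ≤ v) : 0 ≤ pLL γt Km KI v := by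
  have := besselI0_nonneg (Afun Km γt v * Bfun KI γt v)
  exact add_nonneg (one_sub_marcumQ_nonneg _ (sqrt_nonneg _)) (by positivity)

theorem pLL_le (hγt : 0 < γt) (hKm : 0 ≤ Km) (hKI : 0 ≤ KI) (hv : 0 ≤ v) :
    pLL γt Km KI v ≤ γt * (KI + 1) / (v + γt) * besselI0 (√(2 * Km) * √(2 * KI)) := by
  set A := Afun Km γt v
  set B := Bfun KI γt v
  set C := besselI0 (√(2 * Km) * √(2 * KI))
  have hbessel : besselI0 (A * B) ≤ C := besselI0_le_of_sq_le <| by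
    have hA : 0 ≤ A := sqrt_nonneg _
    have hB : 0 ≤ B := sqrt_nonneg _
    gcongr
    exacts [Afun_le hγt hKm hv, Bfun_le hγt hKI hv]
  have hQ : 1 - marcumQ A B ≤ γt * KI / (v + γt) * C :=
    calc 1 - marcumQ A B ≤ B ^ 2 / 2 * besselI0 (A * B) := one_sub_marcumQ_le A (sqrt_nonneg _)
      _ ≤ B ^ 2 / 2 * C := by gcongr
      _ = γt * KI / (v + γt) * C := by rw [Bfun_sq hγt hKI hv]; ring
  have hexp : exp (-(A ^ 2 + B ^ 2) / 2) ≤ 1 := exp_le_one_iff.mpr (by nlinarith)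
  have hrest :
      γt / (v + γt) * exp (-(A ^ 2 + B ^ 2) / 2) * besselI0 (A * B) ≤ γt / (v + γt) * C :=
    calc γt / (v + γt) * exp (-(A ^ 2 + B ^ 2) / 2) * besselI0 (A * B)
        ≤ γt / (v + γt) * 1 * C := by
          have := besselI0_nonneg (A * B)
          have : 0 ≤ γt / (v + γt) := by positivity
          gcongr
      _ = γt / (v + γt) * C := by rw [mul_one]
  calc pLL γt Km KI v ≤ γt * KI / (v + γt) * C + γt / (v + γt) * C := add_le_add hQ hrest
    _ = γt * (KI + 1) / (v + γt) * C := by ring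

end OutageProbability

theorem stmt_11 (γt Km KI : ℝ) (hγt : 0 < γt) (hKm : 0 ≤ Km) (hKI : 0 ≤ KI) :
    pLL γt Km KI 0 = 1 ∧
    Filter.Tendsto (pLL γt Km KI) Filter.atTop (nhds 0) := by
  refine ⟨pLL_zero hγt.ne', ?_⟩
  have hbound : Tendsto (fun v => γt * (KI + 1) / (v + γt) * besselI0 (√(2 * Km) * √(2 * KI)))
      atTop (nhds 0) := by
    simpa using (tendsto_const_nhds.div_atTop
      (tendsto_atTop_add_const_right _ γt tendsto_id)).mul_const (besselI0 (√(2 * Km) * √(2 * KI)))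
  exact squeeze_zero' (eventually_ge_atTop 0 |>.mono fun v hv => pLL_nonneg hγt hv)
    (eventually_ge_atTop 0 |>.mono fun v hv => pLL_le hγt hKm hKI hv) hbound
end
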